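/- For every integer l ≥ 0, the chromatic symmetric functions of small tadpoles satisfy X_{Tp_{3,l}} = 2·X_{P_{l+3}} − X_{C_2}·X_{P_{l+1}} and X_{Tp_{2,l}} = X_{P_{l+2}}. -/

import Mathlib

open Finset

noncomputable section

/-- The ring in which symmetric functions live: formal power series in the
countably many commuting variables `x_0, x_1, x_2, …` with rational coefficients. -/
abbrev SymFun : Type := MvPowerSeries ℕ ℚ

/-- The chromatic symmetric function of a finite graph `G`: the coefficient of
the monomial `∏ i, x_i ^ d i` is the number of proper colorings `κ : V → ℕ`
whose color-class sizes are prescribed by `d`. -/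
def csf {V : Type} [Fintype V] (G : SimpleGraph V) : SymFun :=
  fun d => (Nat.card {κ : V → ℕ //
    (∀ v w : V, G.Adj v w → κ v ≠ κ w) ∧
    ∀ i : ℕ, Nat.card {v : V // κ v = i} = d i} : ℚ)

/-- The path `P_n` on `n` vertices. -/
def pathG (n : ℕ) : SimpleGraph (Fin n) :=
  SimpleGraph.fromRel (fun i j => (i : ℕ) + 1 = (j : ℕ))

/-- The cycle `C_n` on `n` vertices (for `n = 2` this is the single edge `K₂`). -/
def cycleG (n : ℕ) : SimpleGraph (Fin n) :=
  SimpleGraph.fromRel (fun i j => ((i : ℕ) + 1) % n = (j : ℕ))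

/-- The tadpole `Tp_{m,l}`: the disjoint union of the cycle `C_m` and the path `P_l`
together with one edge joining a vertex of the cycle to an end of the path. -/
def tadpole (m l : ℕ) : SimpleGraph (Fin m ⊕ Fin l) :=
  SimpleGraph.fromRel (fun a b =>
    match a, b with
    | Sum.inl i, Sum.inl j => ((i : ℕ) + 1) % m = (j : ℕ)
    | Sum.inr i, Sum.inr j => (i : ℕ) + 1 = (j : ℕ)
    | Sum.inl i, Sum.inr j => (i : ℕ) = 0 ∧ (j : ℕ) = 0
    | _, _ => False)

/-- The line graph of the tadpole `Tp_{m,l}`, described explicitly: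
the disjoint union of the cycle `C_m` and the path `P_l` together with two edges
joining an end `w` of the path to two adjacent vertices `u, v` of the cycle. -/
def lineTadpole (m l : ℕ) : SimpleGraph (Fin m ⊕ Fin l) :=
  SimpleGraph.fromRel (fun a b =>
    match a, b with
    | Sum.inl i, Sum.inl j => ((i : ℕ) + 1) % m = (j : ℕ)
    | Sum.inr i, Sum.inr j => (i : ℕ) + 1 = (j : ℕ)
    | Sum.inl i, Sum.inr j => ((i : ℕ) = 0 ∨ (i : ℕ) = 1) ∧ (j : ℕ) = 0
    | _, _ => False)

/-- The cycle-chord graph `CC_{a,b}`: the cycle `C_{a+b}` on vertices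
`v_0, …, v_{a+b-1}` together with the chord `v_0 v_a`. -/
def cycleChord (a b : ℕ) : SimpleGraph (Fin (a + b)) :=
  SimpleGraph.fromRel (fun i j =>
    ((i : ℕ) + 1) % (a + b) = (j : ℕ) ∨ ((i : ℕ) = 0 ∧ (j : ℕ) = a))

open Classical in
/-- The elementary symmetric function `e_r`. -/
def eSym (r : ℕ) : SymFun :=
  fun d => if (∀ i, d i ≤ 1) ∧ (d.sum fun _ k => k) = r then 1 else 0

open Classical in
/-- The power sum symmetric function `p_n = Σ_i x_i^n` (for `n ≥ 1`). -/
def pSym (n : ℕ) : SymFun :=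
  fun d => if n ≠ 0 ∧ ∃ i : ℕ, d = Finsupp.single i n then 1 else 0

/-- `e_λ = e_{λ_1} ⋯ e_{λ_k}` for a partition `λ` of `n`. -/
def eProd {n : ℕ} (P : n.Partition) : SymFun := (P.parts.map eSym).prod

/-- The ring of formal power series in two variables `x = X 0` and `y = X 1`
over the ring of symmetric functions. -/
abbrev Big : Type := MvPowerSeries (Fin 2) SymFun

/-- The bivariate generating function `Σ_{a,b ≥ 0} c a b · x^a y^b`. -/
def gf2 (c : ℕ → ℕ → SymFun) : Big := fun d => c (d 0) (d 1)

/-- The variable `x`. -/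
def Xv : Big := MvPowerSeries.X 0
/-- The variable `y`. -/
def Yv : Big := MvPowerSeries.X 1

/-- `E(z) = Σ_{n≥0} e_n z^n`, where `z` is the variable `X v`. -/
def Eser (v : Fin 2) : Big :=
  fun d => if ∀ w, w ≠ v → d w = 0 then eSym (d v) else 0

/-- `E'(z) = Σ_{n≥0} (n+1) e_{n+1} z^n`. -/
def Eser' (v : Fin 2) : Big :=
  fun d => if ∀ w, w ≠ v → d w = 0 then ((d v + 1 : ℕ) : SymFun) * eSym (d v + 1) else 0

/-- `E''(z) = Σ_{n≥0} (n+1)(n+2) e_{n+2} z^n`. -/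
def Eser'' (v : Fin 2) : Big :=
  fun d => if ∀ w, w ≠ v → d w = 0 then (((d v + 1) * (d v + 2) : ℕ) : SymFun) * eSym (d v + 2) else 0

/-- `F(z) = E(z) - z E'(z) = Σ_{n≥0} (1-n) e_n z^n`. -/
def Fser (v : Fin 2) : Big :=
  fun d => if ∀ w, w ≠ v → d w = 0 then eSym (d v) - ((d v : ℕ) : SymFun) * eSym (d v) else 0

/-- The partial derivative of a bivariate series with respect to the variable `X v`. -/
def pderiv2 (v : Fin 2) (f : Big) : Big :=
  fun d => ((d v + 1 : ℕ) : SymFun) * f (d + Finsupp.single v 1)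

/-!
The triangle of `Tp_{3,l}` gives the triple-deletion relation of Orellana and Scott: for a
triangle `uvw`, `X_G + X_{G - uv - uw} = X_{G - uv} + X_{G - uw}`, because a proper colouring of
`G - uv - uw` separates `v` from `w`, hence `u` from `v` or from `w`. Taking `u` to be the vertex
carrying the path, `Tp_{3,l} - uv` and `Tp_{3,l} - uw` are paths on `l + 3` vertices, while
`Tp_{3,l} - uv - uw` is `K₂ ⊔ P_{l+1}`, and `X` is multiplicative on disjoint unions.
The tadpole `Tp_{2,l}` is itself a path.
-/

section ProperColoring

variable {V : Type}

def IsProperColoring (G : SimpleGraph V) (κ : V → ℕ) : Prop :=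
  ∀ ⦃v w⦄, G.Adj v w → κ v ≠ κ w

lemma IsProperColoring.anti {G H : SimpleGraph V} {κ : V → ℕ} (hκ : IsProperColoring H κ)
    (hGH : G ≤ H) : IsProperColoring G κ :=
  fun _ _ hvw => hκ (hGH hvw)

lemma isProperColoring_sup_iff {G H : SimpleGraph V} {κ : V → ℕ} :
    IsProperColoring (G ⊔ H) κ ↔ IsProperColoring G κ ∧ IsProperColoring H κ := by
  simp only [IsProperColoring, SimpleGraph.sup_adj, or_imp, forall_and]

lemma isProperColoring_sum_iff {W : Type} {G : SimpleGraph V} {H : SimpleGraph W}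
    {κ : V ⊕ W → ℕ} :
    IsProperColoring (G ⊕g H) κ ↔
      IsProperColoring G (κ ∘ Sum.inl) ∧ IsProperColoring H (κ ∘ Sum.inr) := by
  simp [IsProperColoring, Sum.forall]

lemma IsProperColoring.of_deleteEdges_insert {G : SimpleGraph V} {κ : V → ℕ} {a b : V}
    {s : Set (Sym2 V)} (hκ : IsProperColoring (G.deleteEdges (insert s(a, b) s)) κ)
    (hab : κ a ≠ κ b) : IsProperColoring (G.deleteEdges s) κ := by
  intro x y hxy
  by_cases hx : s(x, y) = s(a, b)
  · rcases Sym2.eq_iff.1 hx with ⟨rfl, rfl⟩ | ⟨rfl, rfl⟩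
    exacts [hab, hab.symm]
  · rw [SimpleGraph.deleteEdges_adj] at hxy
    exact hκ (by simp [hxy.1, hxy.2, hx])

end ProperColoring

section ColorType

variable {V W : Type} [Fintype V] [Fintype W]

/-- The exponent vector of the monomial `∏ v, x_{κ v}`. -/
def colorType (κ : V → ℕ) : ℕ →₀ ℕ := ∑ v, Finsupp.single (κ v) 1

lemma colorType_apply (κ : V → ℕ) (i : ℕ) : colorType κ i = Nat.card {v // κ v = i} := by
  classical
  simp [colorType, Finsupp.finsetSum_apply, Finsupp.single_apply, Finset.sum_boole,
    Nat.card_eq_fintype_card, Fintype.card_subtype]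

lemma colorType_sumElim (κ₁ : V → ℕ) (κ₂ : W → ℕ) :
    colorType (Sum.elim κ₁ κ₂) = colorType κ₁ + colorType κ₂ :=
  Fintype.sum_sum_type _

lemma colorType_comp_equiv (e : W ≃ V) (κ : V → ℕ) : colorType (κ ∘ e) = colorType κ :=
  e.sum_comp fun v => Finsupp.single (κ v) 1

lemma mem_support_colorType (κ : V → ℕ) (v : V) : κ v ∈ (colorType κ).support := by
  rw [Finsupp.mem_support_iff, colorType_apply]
  have : Nonempty {w // κ w = κ v} := ⟨⟨v, rfl⟩⟩
  exact Nat.card_pos.ne'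

def properColorings (G : SimpleGraph V) (d : ℕ →₀ ℕ) : Set (V → ℕ) :=
  {κ | IsProperColoring G κ ∧ colorType κ = d}

lemma finite_properColorings (G : SimpleGraph V) (d : ℕ →₀ ℕ) :
    (properColorings G d).Finite := by
  refine (Set.Finite.pi (t := fun _ : V => (d.support : Set ℕ))
    fun _ => d.support.finite_toSet).subset ?_
  rintro κ ⟨-, rfl⟩ v -
  exact mem_support_colorType κ v

lemma coeff_csf (G : SimpleGraph V) (d : ℕ →₀ ℕ) :
    MvPowerSeries.coeff d (csf G) = (properColorings G d).ncard := by
  have : properColorings G d =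
      {κ | (∀ v w, G.Adj v w → κ v ≠ κ w) ∧ ∀ i, Nat.card {v // κ v = i} = d i} := by
    simp only [properColorings, IsProperColoring, Finsupp.ext_iff, colorType_apply]
  rw [this]
  rfl

end ColorType

section ChromaticSymmetricFunction

variable {V W : Type} [Fintype V] [Fintype W]

lemma csf_congr {G : SimpleGraph V} {H : SimpleGraph W} (e : G ≃g H) : csf G = csf H := by
  ext d
  rw [coeff_csf, coeff_csf]
  congr 1
  refine Set.ncard_congr (fun κ _ => κ ∘ e.symm) ?_ ?_ ?_
  · rintro κ ⟨hκ, rfl⟩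
    exact ⟨fun v w hvw => hκ (e.symm.map_adj_iff.mpr hvw), colorType_comp_equiv _ _⟩
  · intro κ₁ κ₂ _ _ h
    exact e.symm.surjective.injective_comp_right h
  · rintro κ ⟨hκ, rfl⟩
    refine ⟨κ ∘ e, ⟨fun v w hvw => hκ (e.map_adj_iff.mpr hvw), colorType_comp_equiv _ _⟩, ?_⟩
    simp [Function.comp_assoc]

def properColoringsSumFiberEquiv (G : SimpleGraph V) (H : SimpleGraph W) (d : ℕ →₀ ℕ)
    (p : antidiagonal d) :
    {κ : properColorings (G ⊕g H) d //
        (colorType (κ.1 ∘ Sum.inl), colorType (κ.1 ∘ Sum.inr)) = p.1} ≃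
      properColorings G p.1.1 × properColorings H p.1.2 where
  toFun κ := (⟨κ.1.1 ∘ Sum.inl, (isProperColoring_sum_iff.1 κ.1.2.1).1, congrArg Prod.fst κ.2⟩,
    ⟨κ.1.1 ∘ Sum.inr, (isProperColoring_sum_iff.1 κ.1.2.1).2, congrArg Prod.snd κ.2⟩)
  invFun κ := ⟨⟨Sum.elim κ.1 κ.2, isProperColoring_sum_iff.2 ⟨κ.1.2.1, κ.2.2.1⟩, by
      rw [colorType_sumElim, κ.1.2.2, κ.2.2.2, mem_antidiagonal.1 p.2]⟩,
    by simp [κ.1.2.2, κ.2.2.2]⟩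
  left_inv κ := by simp
  right_inv κ := rfl

lemma ncard_properColorings_sum (G : SimpleGraph V) (H : SimpleGraph W) (d : ℕ →₀ ℕ) :
    (properColorings (G ⊕g H) d).ncard =
      ∑ p ∈ antidiagonal d, (properColorings G p.1).ncard * (properColorings H p.2).ncard := by
  have := (finite_properColorings (G ⊕g H) d).to_subtype
  let split : properColorings (G ⊕g H) d → antidiagonal d := fun κ =>
    ⟨(colorType (κ.1 ∘ Sum.inl), colorType (κ.1 ∘ Sum.inr)), by
      rw [HasAntidiagonal.mem_antidiagonal, ← colorType_sumElim, Sum.elim_comp_inl_inr, κ.2.2]⟩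
  rw [← Nat.card_coe_set_eq, ← Nat.card_congr (Equiv.sigmaFiberEquiv split), Nat.card_sigma]
  refine Eq.trans (Fintype.sum_congr _ _ fun p => ?_) (Finset.sum_coe_sort _ _)
  rw [← Nat.card_coe_set_eq, ← Nat.card_coe_set_eq, ← Nat.card_prod]
  exact Nat.card_congr ((Equiv.subtypeEquivRight fun _ => Subtype.ext_iff).trans
    (properColoringsSumFiberEquiv G H d p))

lemma csf_sum (G : SimpleGraph V) (H : SimpleGraph W) : csf (G ⊕g H) = csf G * csf H := by
  ext d
  simp only [MvPowerSeries.coeff_mul, coeff_csf, ncard_properColorings_sum, Nat.cast_sum,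
    Nat.cast_mul]

lemma csf_sup_add_csf_inf (G₁ G₂ : SimpleGraph V)
    (h : ∀ κ, IsProperColoring (G₁ ⊓ G₂) κ → IsProperColoring G₁ κ ∨ IsProperColoring G₂ κ) :
    csf (G₁ ⊔ G₂) + csf (G₁ ⊓ G₂) = csf G₁ + csf G₂ := by
  ext d
  have hinter : properColorings (G₁ ⊔ G₂) d = properColorings G₁ d ∩ properColorings G₂ d := by
    ext κ
    simp only [properColorings, Set.mem_ofPred_eq, Set.mem_inter_iff, isProperColoring_sup_iff]
    tauto
  have hunion : properColorings (G₁ ⊓ G₂) d = properColorings G₁ d ∪ properColorings G₂ d := by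
    ext κ
    simp only [properColorings, Set.mem_ofPred_eq, Set.mem_union]
    refine ⟨fun ⟨hκ, hd⟩ => (h κ hκ).imp (⟨·, hd⟩) (⟨·, hd⟩), ?_⟩
    rintro (⟨hκ, hd⟩ | ⟨hκ, hd⟩)
    exacts [⟨hκ.anti inf_le_left, hd⟩, ⟨hκ.anti inf_le_right, hd⟩]
  simp only [map_add, coeff_csf, hinter, hunion, ← Nat.cast_add]
  rw [add_comm, Set.ncard_union_add_ncard_inter _ _ (finite_properColorings G₁ d)
    (finite_properColorings G₂ d)]

theorem csf_triple_deletion (G : SimpleGraph V) {u v w : V}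
    (huv : G.Adj u v) (huw : G.Adj u w) (hvw : G.Adj v w) :
    csf G + csf (G.deleteEdges {s(u, v), s(u, w)}) =
      csf (G.deleteEdges {s(u, v)}) + csf (G.deleteEdges {s(u, w)}) := by
  have hsup : G.deleteEdges {s(u, v)} ⊔ G.deleteEdges {s(u, w)} = G := by
    ext a b
    simp only [SimpleGraph.sup_adj, SimpleGraph.deleteEdges_adj, Set.mem_singleton_iff]
    refine ⟨fun h => h.elim And.left And.left, fun hab => ?_⟩
    by_contra! h
    exact hvw.ne (Sym2.congr_right.1 ((h.1 hab).symm.trans (h.2 hab)))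
  have hinf : G.deleteEdges {s(u, v)} ⊓ G.deleteEdges {s(u, w)} =
      G.deleteEdges {s(u, v), s(u, w)} := by
    ext a b
    simp only [SimpleGraph.inf_adj, SimpleGraph.deleteEdges_adj, Set.mem_singleton_iff,
      Set.mem_insert_iff]
    tauto
  have hsplit : ∀ κ, IsProperColoring (G.deleteEdges {s(u, v), s(u, w)}) κ →
      IsProperColoring (G.deleteEdges {s(u, v)}) κ ∨
        IsProperColoring (G.deleteEdges {s(u, w)}) κ := by
    intro κ hκ
    have hκvw : κ v ≠ κ w := hκ (by simp [hvw, huv.ne', huw.ne'])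
    by_cases hκuv : κ u = κ v
    · rw [Set.pair_comm] at hκ
      exact .inl (hκ.of_deleteEdges_insert (hκuv ▸ hκvw))
    · exact .inr (hκ.of_deleteEdges_insert hκuv)
  have key := csf_sup_add_csf_inf _ _ fun κ hκ => hsplit κ (hinf ▸ hκ)
  rwa [hsup, hinf] at key

end ChromaticSymmetricFunction

lemma pathG_adj {n : ℕ} {a b : Fin n} :
    (pathG n).Adj a b ↔ (a : ℕ) + 1 = b ∨ (b : ℕ) + 1 = a := by
  rw [pathG, SimpleGraph.fromRel_adj, and_iff_right_iff_imp, Ne, Fin.ext_iff]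
  omega

def finSumFinPermEquiv {m : ℕ} (σ : Equiv.Perm (Fin m)) (l : ℕ) : Fin m ⊕ Fin l ≃ Fin (l + m) :=
  (σ.sumCongr (Equiv.refl _)).trans (finSumFinEquiv.trans (finCongr (Nat.add_comm m l)))

@[simp] lemma finSumFinPermEquiv_inl {m l : ℕ} (σ : Equiv.Perm (Fin m)) (i : Fin m) :
    (finSumFinPermEquiv σ l (.inl i) : ℕ) = σ i := by
  simp [finSumFinPermEquiv]

@[simp] lemma finSumFinPermEquiv_inr {m l : ℕ} (σ : Equiv.Perm (Fin m)) (j : Fin l) :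
    (finSumFinPermEquiv σ l (.inr j) : ℕ) = m + j := by
  simp [finSumFinPermEquiv, Nat.add_comm]

def finThreeEquiv : Fin 3 ≃ Fin 2 ⊕ Fin 1 where
  toFun := ![.inr 0, .inl 0, .inl 1]
  invFun := Sum.elim ![1, 2] ![0]
  left_inv := by decide
  right_inv := by decide

section TadpoleIsos

variable (l : ℕ)

def tadpoleTwoIsoPath : tadpole 2 l ≃g pathG (l + 2) where
  toEquiv := finSumFinPermEquiv (Equiv.swap 0 1) l
  map_rel_iff' := by
    rintro (i | i) (j | j) <;> (try fin_cases i) <;> (try fin_cases j) <;>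
      simp [tadpole, pathG_adj, SimpleGraph.fromRel_adj] <;> omega

def tadpoleThreeDelete01IsoPath :
    (tadpole 3 l).deleteEdges {s(.inl 0, .inl 1)} ≃g pathG (l + 3) where
  toEquiv := finSumFinPermEquiv (Equiv.addRight 2) l
  map_rel_iff' := by
    rintro (i | i) (j | j) <;> (try fin_cases i) <;> (try fin_cases j) <;>
      simp [tadpole, pathG_adj, SimpleGraph.fromRel_adj] <;> omega

def tadpoleThreeDelete02IsoPath :
    (tadpole 3 l).deleteEdges {s(.inl 0, .inl 2)} ≃g pathG (l + 3) where
  toEquiv := finSumFinPermEquiv Fin.revPerm l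
  map_rel_iff' := by
    rintro (i | i) (j | j) <;> (try fin_cases i) <;> (try fin_cases j) <;>
      simp [tadpole, pathG_adj, SimpleGraph.fromRel_adj] <;> omega

def tadpoleThreeDelete0102IsoSum :
    (tadpole 3 l).deleteEdges {s(.inl 0, .inl 1), s(.inl 0, .inl 2)} ≃g
      cycleG 2 ⊕g pathG (l + 1) where
  toEquiv := (finThreeEquiv.sumCongr (Equiv.refl _)).trans
    ((Equiv.sumAssoc _ _ _).trans ((Equiv.refl _).sumCongr (finSumFinPermEquiv (Equiv.refl _) l)))
  map_rel_iff' := by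
    rintro (i | i) (j | j) <;> (try fin_cases i) <;> (try fin_cases j) <;>
      simp [finThreeEquiv, tadpole, cycleG, pathG_adj, SimpleGraph.fromRel_adj]
    omega

end TadpoleIsos

theorem tadpole_small_cases (l : ℕ) :
    csf (tadpole 3 l) = 2 * csf (pathG (l + 3)) - csf (cycleG 2) * csf (pathG (l + 1)) ∧
    csf (tadpole 2 l) = csf (pathG (l + 2)) := by
  refine ⟨?_, csf_congr (tadpoleTwoIsoPath l)⟩
  have h := csf_triple_deletion (tadpole 3 l) (u := .inl 0) (v := .inl 1) (w := .inl 2)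
    (by simp [tadpole]) (by simp [tadpole]) (by simp [tadpole])
  rw [csf_congr (tadpoleThreeDelete01IsoPath l), csf_congr (tadpoleThreeDelete02IsoPath l),
    csf_congr (tadpoleThreeDelete0102IsoSum l), csf_sum] at h
  rw [eq_sub_iff_add_eq, h, two_mul]
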